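/- arXiv:1803.06499 — 6 statements merged into one kernel-verified Lean document; each statement's English description precedes it below -/
import Mathlib

section
/- For every λ = (λ_1, …, λ_n) ∈ ℂ^n, the determinant of the Jacobian matrix (∂π_{n,k}/∂λ_j)_{1≤k,j≤n} of the symmetrization map π_n at λ equals ∏_{1≤i<j≤n}(λ_i − λ_j). -/
/-!
The entry `∂π_{n,k}/∂λ_j` is `e_{k-1}` of the variables other than `λ_j`. Dividing
`∏ᵢ (1 + λᵢ t)` by `1 + λⱼ t` gives `e_k(λ without λⱼ) = ∑_{l ≤ k} e_{k-l}(λ) (-λⱼ)^l`, so the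
Jacobian matrix is a unipotent lower triangular Toeplitz matrix of the `e_m(λ)` times the
transposed Vandermonde matrix of `-λ`; its determinant is therefore the Vandermonde determinant
`∏_{i<j} (λᵢ - λⱼ)`.
-/

/-- The symmetrization map `π_n : ℂ^n → ℂ^n`, whose `k`-th component is the `k`-th
elementary symmetric polynomial of the coordinates. -/
noncomputable def symmMap (n : ℕ) (lam : Fin n → ℂ) : Fin n → ℂ :=
  fun k => ∑ t ∈ Finset.powersetCard (k.1 + 1) Finset.univ, ∏ i ∈ t, lam i

open Finset Matrix

theorem Finset.map_val_eq_cons_erase {ι α : Type*} [DecidableEq ι] {s : Finset ι} {j : ι}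
    (hj : j ∈ s) (f : ι → α) : s.val.map f = f j ::ₘ (s.erase j).val.map f := by
  rw [Finset.erase_val, ← Multiset.map_cons, Multiset.cons_erase hj]

namespace Multiset

variable {R : Type*} [CommRing R]

@[simp]
theorem esymm_zero (s : Multiset R) : s.esymm 0 = 1 := by
  simp [esymm]

theorem esymm_cons_succ (a : R) (s : Multiset R) (k : ℕ) :
    (a ::ₘ s).esymm (k + 1) = s.esymm (k + 1) + a * s.esymm k := by
  simp [esymm, powersetCard_cons, map_map, sum_map_mul_left]

theorem esymm_eq_sum_esymm_cons_mul_neg_pow (a : R) (s : Multiset R) (k : ℕ) :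
    s.esymm k = ∑ l ∈ Finset.range (k + 1), (a ::ₘ s).esymm (k - l) * (-a) ^ l := by
  induction k with
  | zero => simp
  | succ k ih =>
    rw [Finset.sum_range_succ', Nat.sub_zero, esymm_cons_succ, ih, Finset.mul_sum, pow_zero,
      mul_one, add_left_comm, ← Finset.sum_add_distrib]
    simp only [Nat.add_sub_add_right, pow_succ, left_eq_add]
    exact Finset.sum_eq_zero fun l _ => by ring

end Multiset

namespace Matrix

variable {R : Type*} [CommRing R] {n : ℕ}

def esymmEraseMatrix (v : Fin n → R) : Matrix (Fin n) (Fin n) R :=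
  of fun k j => ((univ.erase j).val.map v).esymm k

def esymmToeplitz (v : Fin n → R) : Matrix (Fin n) (Fin n) R :=
  of fun k l => if l ≤ k then (univ.val.map v).esymm (k - l) else 0

theorem det_esymmToeplitz (v : Fin n → R) : (esymmToeplitz v).det = 1 := by
  rw [det_of_isLowerTriangular]
  · simp [esymmToeplitz]
  · intro k l hkl
    exact if_neg (not_le.2 hkl)

theorem esymmEraseMatrix_eq_esymmToeplitz_mul (v : Fin n → R) :
    esymmEraseMatrix v = esymmToeplitz v * (vandermonde (-v))ᵀ := by
  ext k j
  rw [esymmEraseMatrix, of_apply, Multiset.esymm_eq_sum_esymm_cons_mul_neg_pow (v j),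
    ← map_val_eq_cons_erase (mem_univ j), mul_apply]
  simp only [esymmToeplitz, of_apply, transpose_apply, vandermonde_apply, Pi.neg_apply, ite_mul,
    zero_mul, Fin.le_iff_val_le_val]
  rw [Fin.sum_univ_eq_sum_range
    (fun l => if l ≤ k.1 then (univ.val.map v).esymm (k - l) * (-v j) ^ l else 0), ← sum_filter]
  congr 1
  ext l
  simp only [mem_range, mem_filter]
  omega

theorem det_esymmEraseMatrix (v : Fin n → R) :
    (esymmEraseMatrix v).det = ∏ i : Fin n, ∏ j ∈ Ioi i, (v i - v j) := by
  rw [esymmEraseMatrix_eq_esymmToeplitz_mul, det_mul, det_esymmToeplitz, one_mul, det_transpose,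
    det_vandermonde]
  simp only [Pi.neg_apply, neg_sub_neg]

end Matrix

section Derivative

variable {𝕜 : Type*} [NontriviallyNormedField 𝕜] {ι : Type*} [Fintype ι] [DecidableEq ι]

theorem hasLineDerivAt_esymm_single (x : ι → 𝕜) (j : ι) (k : ℕ) :
    HasLineDerivAt 𝕜 (fun y : ι → 𝕜 => (univ.val.map y).esymm (k + 1))
      (((univ.erase j).val.map x).esymm k) x (Pi.single j 1) := by
  have hline (t : 𝕜) : (univ.erase j).val.map (x + t • Pi.single j 1) = (univ.erase j).val.map x :=
    Multiset.map_congr rfl fun i hi => by simp [ne_of_mem_erase hi]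
  unfold HasLineDerivAt
  simp_rw [map_val_eq_cons_erase (mem_univ j), Multiset.esymm_cons_succ, hline]
  simp only [Pi.add_apply, Pi.smul_apply, Pi.single_eq_same, smul_eq_mul, mul_one]
  exact ((((hasDerivAt_id' 0).const_add (x j)).mul_const _).const_add _).congr_deriv (one_mul _)

theorem fderiv_esymm_apply_single (x : ι → 𝕜) (j : ι) (k : ℕ) :
    fderiv 𝕜 (fun y : ι → 𝕜 => (univ.val.map y).esymm (k + 1)) x (Pi.single j 1) =
      ((univ.erase j).val.map x).esymm k := by
  have hdiff : DifferentiableAt 𝕜 (fun y : ι → 𝕜 => (univ.val.map y).esymm (k + 1)) x := by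
    simp only [Finset.esymm_map_val]
    fun_prop
  rw [← hdiff.lineDeriv_eq_fderiv, (hasLineDerivAt_esymm_single x j k).lineDeriv]

end Derivative

theorem symmMap_apply_eq_esymm (n : ℕ) (lam : Fin n → ℂ) (k : Fin n) :
    symmMap n lam k = (univ.val.map lam).esymm (k + 1) :=
  (Finset.esymm_map_val lam univ _).symm

/-- The determinant of the Jacobian matrix `(∂π_{n,k}/∂λ_j)` of the symmetrization map
at `λ` equals `∏_{i<j} (λ_i − λ_j)`. -/
theorem det_jacobian_symmMap (n : ℕ) (lam : Fin n → ℂ) :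
    Matrix.det (Matrix.of fun k j : Fin n =>
        fderiv ℂ (fun x => symmMap n x k) lam (Pi.single j 1))
      = ∏ i : Fin n, ∏ j ∈ Finset.Ioi i, (lam i - lam j) := by
  have hjacobian : (Matrix.of fun k j : Fin n =>
      fderiv ℂ (fun x => symmMap n x k) lam (Pi.single j 1)) = esymmEraseMatrix lam := by
    ext k j
    simp only [symmMap_apply_eq_esymm, of_apply, fderiv_esymm_apply_single, esymmEraseMatrix]
  rw [hjacobian, det_esymmEraseMatrix]
end

section
/- The restriction of the symmetrization map to the unit polydisc is a proper map onto the symmetrized polydisc: for every compact subset K of ℂ^n with K ⊆ 𝔾_n, the set π_n^{-1}(K) ∩ 𝔻^n is compact. -/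
/-- The open unit polydisc `𝔻^n ⊆ ℂ^n`. -/
def polydisc (n : ℕ) : Set (Fin n → ℂ) := {z | ∀ i, ‖z i‖ < 1}

/-- The symmetrized polydisc `𝔾_n = π_n(𝔻^n)`. -/
noncomputable def symmPolydisc (n : ℕ) : Set (Fin n → ℂ) := symmMap n '' polydisc n

open Polynomial

namespace Multiset

variable {R : Type*} [CommRing R] [IsDomain R]

theorem eq_of_card_eq_of_esymm_succ_eq {s t : Multiset R} (hcard : card s = card t)
    (hes : ∀ j < card s, s.esymm (j + 1) = t.esymm (j + 1)) : s = t := by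
  have hprod : (s.map fun a => X - C a).prod = (t.map fun a => X - C a).prod := by
    rw [prod_X_sub_X_eq_sum_esymm, prod_X_sub_X_eq_sum_esymm, ← hcard]
    refine Finset.sum_congr rfl fun j hj => ?_
    obtain _ | j := j
    · simp only [esymm, powersetCard_zero_left, map_singleton, prod_zero, sum_singleton]
    · rw [hes j (by simpa [Nat.lt_succ_iff] using hj)]
  simpa only [roots_multiset_prod_X_sub_C] using congrArg roots hprod

end Multiset

theorem symmMap_apply (n : ℕ) (z : Fin n → ℂ) (k : Fin n) :
    symmMap n z k = (Finset.univ.val.map z).esymm (k + 1) :=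
  (Finset.esymm_map_val z _ _).symm

theorem continuous_symmMap (n : ℕ) : Continuous (symmMap n) :=
  continuous_pi fun k => by unfold symmMap; fun_prop

theorem map_univ_eq_of_symmMap_eq {n : ℕ} {z w : Fin n → ℂ} (h : symmMap n z = symmMap n w) :
    Finset.univ.val.map z = Finset.univ.val.map w := by
  refine Multiset.eq_of_card_eq_of_esymm_succ_eq (by simp) fun j hj => ?_
  simp only [Multiset.card_map, Finset.card_val, Finset.card_univ, Fintype.card_fin] at hj
  simpa only [symmMap_apply] using congrFun h ⟨j, hj⟩

theorem polydisc_eq_ball (n : ℕ) : polydisc n = Metric.ball 0 1 := by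
  ext z
  simp [polydisc, pi_norm_lt_iff zero_lt_one]

theorem symmMap_preimage_symmPolydisc (n : ℕ) : symmMap n ⁻¹' symmPolydisc n = polydisc n := by
  refine Set.Subset.antisymm (fun z ⟨w, hw, hwz⟩ i => ?_) fun z hz => ⟨z, hz, rfl⟩
  have hzi : z i ∈ Finset.univ.val.map w := by
    rw [map_univ_eq_of_symmMap_eq hwz]
    exact Multiset.mem_map_of_mem z (Finset.mem_univ_val i)
  obtain ⟨j, -, hj⟩ := Multiset.mem_map.1 hzi
  exact hj ▸ hw j

/-- The restriction `π_n : 𝔻^n → 𝔾_n` is proper: preimages (within `𝔻^n`) of compact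
subsets of `𝔾_n` are compact. -/
theorem symmMap_restrict_isProper (n : ℕ) (K : Set (Fin n → ℂ))
    (hK : IsCompact K) (hKsub : K ⊆ symmPolydisc n) :
    IsCompact (symmMap n ⁻¹' K ∩ polydisc n) := by
  have hsub : symmMap n ⁻¹' K ⊆ polydisc n :=
    (Set.preimage_mono hKsub).trans (symmMap_preimage_symmPolydisc n).subset
  rw [Set.inter_eq_left.2 hsub]
  refine (isCompact_closedBall 0 1).of_isClosed_subset
    (hK.isClosed.preimage (continuous_symmMap n)) (hsub.trans ?_)
  rw [polydisc_eq_ball]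
  exact Metric.ball_subset_closedBall
end

section
/- There exists a polynomial H_1 in 2n complex variables such that for all λ, w ∈ ℂ^n with 1 − λ_j w_k ≠ 0 for all 1 ≤ j, k ≤ n, one has det[(1 − λ_j w_k)^{−2}]_{1≤j,k≤n} · ∏_{i=1}^n ∏_{j=1}^n (1 − λ_i w_j)² = H_1(π_n(λ), π_n(w)) · ∏_{1≤j<k≤n}(λ_j − λ_k) · ∏_{1≤j<k≤n}(w_j − w_k). -/
open MvPolynomial

/-!
Multiplying row `j` of `[(1 - λ_j w_k)⁻²]` by `∏_m (1 - λ_j w_m)²` turns the left-hand side into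
the determinant `D` of a matrix of polynomials in `λ, w`. Permuting the `λ`'s permutes the rows and
permuting the `w`'s permutes the columns, so `D` is alternating in `λ` and in `w`. An alternating
polynomial vanishes on `λ_j = λ_k`, so it is divisible by each `λ_j - λ_k`; these linear forms are
pairwise non-associated primes, so `D` is divisible by both Vandermonde products. The quotient is
symmetric in `λ` and in `w` separately. Viewing it as a polynomial in `λ` with coefficients in
`ℂ[w]`, the coefficients are symmetric in `w`, and the fundamental theorem of symmetric
polynomials, applied first to the coefficients and then in `λ`, writes it as `H₁(π_n(λ), π_n(w))`.
-/

open Finset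

namespace MvPolynomial

section LinearFactors

variable {σ R : Type*} [CommRing R]

theorem X_sub_X_dvd_sub_aeval_update [DecidableEq σ] (a b : σ) (P : MvPolynomial σ R) :
    X a - X b ∣ P - aeval (Function.update X a (X b)) P := by
  let π := Ideal.Quotient.mkₐ R (Ideal.span {(X a - X b : MvPolynomial σ R)})
  have hπ : (fun c => π (Function.update X a (X b) c)) = π ∘ X := by
    funext c
    rcases eq_or_ne c a with rfl | hc
    · simp only [π, Function.update_self, Function.comp_apply, Ideal.Quotient.mkₐ_eq_mk,
        Ideal.Quotient.eq, Ideal.mem_span_singleton]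
      exact ⟨-1, by ring⟩
    · simp [hc]
  rw [← Ideal.mem_span_singleton, ← Ideal.Quotient.eq, ← Ideal.Quotient.mkₐ_eq_mk R,
    comp_aeval_apply, hπ, ← aeval_unique]

theorem X_sub_X_dvd_of_rename_swap [IsDomain R] [NeZero (2 : R)] [DecidableEq σ] {a b : σ}
    {P : MvPolynomial σ R} (h : rename (Equiv.swap a b) P = -P) : X a - X b ∣ P := by
  set g := Function.update (X : σ → MvPolynomial σ R) a (X b) with hg_def
  have hg : g ∘ Equiv.swap a b = g := by
    funext c
    rcases eq_or_ne c a with rfl | hca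
    · rcases eq_or_ne b c with rfl | hbc <;> simp [g, *]
    rcases eq_or_ne c b with rfl | hcb
    · simp [g, hca]
    · simp [Equiv.swap_apply_of_ne_of_ne hca hcb]
  have h2 : (2 : MvPolynomial σ R) * aeval g P = 0 := by
    have := congrArg (aeval g) h
    rw [aeval_rename, hg, map_neg] at this
    linear_combination this
  have hP : aeval g P = 0 := by
    refine (mul_eq_zero.mp h2).resolve_left ?_
    simpa [map_ofNat] using (C_injective σ R).ne (two_ne_zero : (2 : R) ≠ 0)
  have := X_sub_X_dvd_sub_aeval_update a b P
  rwa [← hg_def, hP, sub_zero] at this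

theorem prime_X_sub_X [IsDomain R] {a b : σ} (hab : a ≠ b) :
    Prime (X a - X b : MvPolynomial σ R) := by
  classical
  let E := (renameEquiv R (Equiv.optionSubtypeNe a).symm).trans
    (optionEquivLeft R {c : σ // c ≠ a})
  have hE : E (X a - X b) = Polynomial.X - Polynomial.C (X ⟨b, hab.symm⟩) := by
    simp [E, Equiv.optionSubtypeNe_symm_of_ne hab.symm]
  rw [← MulEquiv.prime_iff E.toRingEquiv.toMulEquiv]
  exact hE ▸ Polynomial.prime_X_sub_C _

theorem not_X_sub_X_dvd [Nontrivial R] {a b c d : σ} (hca : c ≠ a) (hcb : c ≠ b) (hcd : c ≠ d) :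
    ¬ (X a - X b : MvPolynomial σ R) ∣ X c - X d := by
  classical
  rintro ⟨q, hq⟩
  simpa [hca.symm, hcb.symm, hcd.symm] using congrArg (eval (Pi.single c 1)) hq

theorem eq_and_eq_of_X_sub_X_dvd [Nontrivial R] {a b c d : σ} (hcd : c ≠ d)
    (h : (X a - X b : MvPolynomial σ R) ∣ X c - X d) : c = a ∧ d = b ∨ c = b ∧ d = a := by
  have hc : c = a ∨ c = b := by
    by_contra! hc
    exact not_X_sub_X_dvd hc.1 hc.2 hcd h
  have hd : d = a ∨ d = b := by
    by_contra! hd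
    exact not_X_sub_X_dvd hd.1 hd.2 hcd.symm (by simpa using dvd_neg.mpr h)
  rcases hc with rfl | rfl <;> rcases hd with rfl | rfl <;> simp_all

theorem isRelPrime_X_sub_X [IsDomain R] {a b c d : σ} (hab : a ≠ b)
    (hcd : c ≠ d) (h : ¬ (c = a ∧ d = b ∨ c = b ∧ d = a)) :
    IsRelPrime (X a - X b : MvPolynomial σ R) (X c - X d) :=
  (prime_X_sub_X hab).irreducible.isRelPrime_iff_not_dvd.mpr
    fun hdvd => h (eq_and_eq_of_X_sub_X_dvd hcd hdvd)

end LinearFactors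

section Vandermonde

variable {σ τ R : Type*} [CommRing R] {n : ℕ}

variable (R n) in
noncomputable def vandermondePoly : MvPolynomial (Fin n) R :=
  ∏ j, ∏ k ∈ Ioi j, (X j - X k)

@[simp]
theorem eval_vandermondePoly (v : Fin n → R) :
    eval v (vandermondePoly R n) = ∏ j, ∏ k ∈ Ioi j, (v j - v k) := by
  simp [vandermondePoly]

theorem vandermondePoly_eq_det :
    vandermondePoly R n = (-1) ^ (∑ j : Fin n, #(Ioi j)) *
      (Matrix.vandermonde (X : Fin n → MvPolynomial (Fin n) R)).det := by
  rw [Matrix.det_vandermonde, ← prod_pow_eq_pow_sum, ← prod_mul_distrib, vandermondePoly]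
  refine prod_congr rfl fun j _ => ?_
  rw [← prod_const, ← prod_mul_distrib]
  exact prod_congr rfl fun k _ => by ring

theorem rename_vandermondePoly (e : Equiv.Perm (Fin n)) :
    rename e (vandermondePoly R n) = Equiv.Perm.sign e * vandermondePoly R n := by
  have : (Matrix.vandermonde X).map (rename (R := R) e) =
      (Matrix.vandermonde X).submatrix e id := by
    ext
    simp [Matrix.vandermonde]
  rw [vandermondePoly_eq_det, map_mul, AlgHom.map_det, AlgHom.mapMatrix_apply, this,
    Matrix.det_permute]
  simp only [map_pow, map_neg, map_one]
  ring

theorem vandermondePoly_ne_zero [IsDomain R] : vandermondePoly R n ≠ 0 :=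
  prod_ne_zero_iff.mpr fun _ _ => prod_ne_zero_iff.mpr fun _ hk =>
    sub_ne_zero.mpr ((X_injective (σ := Fin n) (R := R)).ne (mem_Ioi.mp hk).ne)

theorem rename_vandermondePoly_eq_prod_sigma (f : Fin n → σ) :
    rename f (vandermondePoly R n) =
      ∏ p ∈ univ.sigma fun j => Ioi j, (X (f p.1) - X (f p.2)) := by
  simp [vandermondePoly, prod_sigma]

theorem rename_vandermondePoly_dvd [IsDomain R] [UniqueFactorizationMonoid R] {f : Fin n → σ}
    (hf : Function.Injective f) {P : MvPolynomial σ R}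
    (hP : ∀ j k, j < k → X (f j) - X (f k) ∣ P) : rename f (vandermondePoly R n) ∣ P := by
  rw [rename_vandermondePoly_eq_prod_sigma]
  refine prod_dvd_of_isRelPrime ?_ fun p hp => hP _ _ (by simpa using hp)
  rintro ⟨j, k⟩ hjk ⟨j', k'⟩ hjk' hne
  simp only [coe_sigma, Set.mem_sigma_iff, coe_univ, Set.mem_univ, coe_Ioi, Set.mem_Ioi,
    true_and] at hjk hjk'
  refine isRelPrime_X_sub_X (hf.ne hjk.ne) (hf.ne hjk'.ne) ?_
  simp only [hf.eq_iff]
  rintro (⟨rfl, rfl⟩ | ⟨rfl, rfl⟩)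
  · exact hne rfl
  · exact lt_asymm hjk hjk'

theorem isRelPrime_rename_vandermondePoly [IsDomain R] [UniqueFactorizationMonoid R]
    {f g : Fin n → σ} (hf : Function.Injective f) (hg : Function.Injective g)
    (hfg : ∀ j k, f j ≠ g k) :
    IsRelPrime (rename f (vandermondePoly R n)) (rename g (vandermondePoly R n)) := by
  rw [rename_vandermondePoly_eq_prod_sigma, rename_vandermondePoly_eq_prod_sigma]
  refine IsRelPrime.prod_left fun p hp => IsRelPrime.prod_right fun q hq => ?_
  simp only [mem_sigma, mem_univ, mem_Ioi, true_and] at hp hq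
  refine isRelPrime_X_sub_X (hf.ne hp.ne) (hg.ne hq.ne) ?_
  rintro (⟨h, -⟩ | ⟨h, -⟩) <;> exact hfg _ _ h.symm

variable [IsDomain R] [UniqueFactorizationMonoid R] [NeZero (2 : R)]

theorem rename_inl_vandermondePoly_dvd [DecidableEq τ] {P : MvPolynomial (Fin n ⊕ τ) R}
    (hP : ∀ e : Equiv.Perm (Fin n), rename (Sum.map e id) P = Equiv.Perm.sign e * P) :
    rename Sum.inl (vandermondePoly R n) ∣ P := by
  refine rename_vandermondePoly_dvd Sum.inl_injective fun j k hjk => X_sub_X_dvd_of_rename_swap ?_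
  have hswap : ⇑(Equiv.swap (Sum.inl j) (Sum.inl k) : Equiv.Perm (Fin n ⊕ τ)) =
      Sum.map (Equiv.swap j k) id := by
    rw [← Equiv.Perm.sumCongr_swap_one]
    ext x
    exact Equiv.Perm.sumCongr_apply _ _ x
  rw [hswap, hP, Equiv.Perm.sign_swap hjk.ne]
  simp

theorem rename_inr_vandermondePoly_dvd [DecidableEq σ] {P : MvPolynomial (σ ⊕ Fin n) R}
    (hP : ∀ e : Equiv.Perm (Fin n), rename (Sum.map id e) P = Equiv.Perm.sign e * P) :
    rename Sum.inr (vandermondePoly R n) ∣ P := by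
  refine rename_vandermondePoly_dvd Sum.inr_injective fun j k hjk => X_sub_X_dvd_of_rename_swap ?_
  have hswap : ⇑(Equiv.swap (Sum.inr j) (Sum.inr k) : Equiv.Perm (σ ⊕ Fin n)) =
      Sum.map id (Equiv.swap j k) := by
    rw [← Equiv.Perm.sumCongr_one_swap]
    ext x
    exact Equiv.Perm.sumCongr_apply _ _ x
  rw [hswap, hP, Equiv.Perm.sign_swap hjk.ne]
  simp

end Vandermonde

section VandermondeProd

variable {R : Type*} [CommRing R] {n : ℕ}

variable (R n) in
noncomputable def vandermondeProd : MvPolynomial (Fin n ⊕ Fin n) R :=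
  rename Sum.inl (vandermondePoly R n) * rename Sum.inr (vandermondePoly R n)

theorem eval_vandermondeProd (v w : Fin n → R) :
    eval (Sum.elim v w) (vandermondeProd R n) =
      (∏ j, ∏ k ∈ Ioi j, (v j - v k)) * ∏ j, ∏ k ∈ Ioi j, (w j - w k) := by
  simp [vandermondeProd, eval_rename, Function.comp_def]

theorem rename_sumMap_id_vandermondeProd (e : Equiv.Perm (Fin n)) :
    rename (Sum.map e id) (vandermondeProd R n) = Equiv.Perm.sign e * vandermondeProd R n := by
  rw [vandermondeProd, map_mul, rename_rename, rename_rename]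
  change rename (Sum.inl ∘ e) _ * rename Sum.inr _ = _
  rw [← rename_rename, rename_vandermondePoly, map_mul, map_intCast, mul_assoc]

theorem rename_id_sumMap_vandermondeProd (e : Equiv.Perm (Fin n)) :
    rename (Sum.map id e) (vandermondeProd R n) = Equiv.Perm.sign e * vandermondeProd R n := by
  rw [vandermondeProd, map_mul, rename_rename, rename_rename]
  change rename Sum.inl _ * rename (Sum.inr ∘ e) _ = _
  rw [← rename_rename, rename_vandermondePoly, map_mul, map_intCast, mul_left_comm]

variable [IsDomain R]

theorem vandermondeProd_ne_zero : vandermondeProd R n ≠ 0 :=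
  mul_ne_zero ((rename_injective _ Sum.inl_injective).ne vandermondePoly_ne_zero)
    ((rename_injective _ Sum.inr_injective).ne vandermondePoly_ne_zero)

theorem vandermondeProd_dvd [UniqueFactorizationMonoid R] [NeZero (2 : R)]
    {P : MvPolynomial (Fin n ⊕ Fin n) R}
    (hl : ∀ e : Equiv.Perm (Fin n), rename (Sum.map e id) P = Equiv.Perm.sign e * P)
    (hr : ∀ e : Equiv.Perm (Fin n), rename (Sum.map id e) P = Equiv.Perm.sign e * P) :
    vandermondeProd R n ∣ P :=
  (isRelPrime_rename_vandermondePoly Sum.inl_injective Sum.inr_injective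
    fun _ _ => Sum.inl_ne_inr).mul_dvd (rename_inl_vandermondePoly_dvd hl)
    (rename_inr_vandermondePoly_dvd hr)

end VandermondeProd

section SymmetricInTwoBlocks

variable {σ τ σ' τ' R : Type*} [CommRing R]

theorem sumRingEquiv_rename_sumMap_id (f : σ → σ') (p : MvPolynomial (σ ⊕ τ) R) :
    sumRingEquiv R σ' τ (rename (Sum.map f id) p) = rename f (sumRingEquiv R σ τ p) := by
  induction p using MvPolynomial.induction_on with
  | C r => simp
  | add p q hp hq => simp [hp, hq]
  | mul_X p i hp => rcases i with i | i <;> simp [hp]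

theorem sumRingEquiv_rename_id_sumMap (g : τ → τ') (p : MvPolynomial (σ ⊕ τ) R) :
    sumRingEquiv R σ τ' (rename (Sum.map id g) p) =
      map (rename (R := R) g : MvPolynomial τ R →+* MvPolynomial τ' R) (sumRingEquiv R σ τ p) := by
  induction p using MvPolynomial.induction_on with
  | C r => simp
  | add p q hp hq => simp [hp, hq]
  | mul_X p i hp => rcases i with i | i <;> simp [hp]

theorem sumRingEquiv_symm_C (a : MvPolynomial τ R) :
    (sumRingEquiv R σ τ).symm (C a) = rename Sum.inr a := by
  induction a using MvPolynomial.induction_on with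
  | C r => simp
  | add a b ha hb => simp [ha, hb]
  | mul_X a i ha => simp [ha]

variable (σ R) in
noncomputable abbrev aevalEsymm [Fintype σ] (n : ℕ) :
    MvPolynomial (Fin n) R →ₐ[R] MvPolynomial σ R :=
  aeval fun i => esymm σ R (i + 1)

variable [Fintype σ] [Fintype τ]

theorem aevalEsymm_injective {n : ℕ} (hn : n ≤ Fintype.card σ) :
    Function.Injective (aevalEsymm σ R n) := by
  intro p q h
  apply esymmAlgHom_injective R hn
  ext1
  simpa [esymmAlgHom_apply] using h

theorem exists_aevalEsymm_eq {n : ℕ} (hn : Fintype.card σ ≤ n) {p : MvPolynomial σ R}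
    (hp : p.IsSymmetric) : ∃ q, aevalEsymm σ R n q = p := by
  obtain ⟨q, hq⟩ := esymmAlgHom_surjective R hn ⟨p, hp⟩
  exact ⟨q, by simpa [esymmAlgHom_apply] using congrArg Subtype.val hq⟩

theorem aeval_sumRingEquiv_symm {m n : ℕ} (p : MvPolynomial (Fin m) (MvPolynomial (Fin n) R)) :
    aeval (Sum.elim (fun i : Fin m => rename Sum.inl (esymm σ R (i + 1)))
        (fun i : Fin n => rename Sum.inr (esymm τ R (i + 1)))) ((sumRingEquiv R _ _).symm p) =
      (sumRingEquiv R σ τ).symm (map (aevalEsymm τ R n).toRingHom (aevalEsymm σ _ m p)) := by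
  induction p using MvPolynomial.induction_on with
  | C a =>
    rw [sumRingEquiv_symm_C, aeval_rename, aeval_C, algebraMap_eq, map_C, sumRingEquiv_symm_C,
      AlgHom.toRingHom_eq_coe, RingHom.coe_coe, comp_aeval_apply]
    rfl
  | add p q hp hq => simp_all
  | mul_X p i hp => simp_all [esymm, map_sum, map_prod]

theorem exists_aeval_esymm_sum_eq {m n : ℕ} (hm : Fintype.card σ = m) (hn : Fintype.card τ = n)
    {Q : MvPolynomial (σ ⊕ τ) R}
    (hσ : ∀ e : Equiv.Perm σ, rename (Sum.map e id) Q = Q)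
    (hτ : ∀ e : Equiv.Perm τ, rename (Sum.map id e) Q = Q) :
    ∃ H : MvPolynomial (Fin m ⊕ Fin n) R,
      aeval (Sum.elim (fun i : Fin m => rename Sum.inl (esymm σ R (i + 1)))
        (fun i : Fin n => rename Sum.inr (esymm τ R (i + 1)))) H = Q := by
  have hcoeff : ∀ d, ((sumRingEquiv R σ τ Q).coeff d).IsSymmetric := fun d e => by
    rw [← AlgHom.coe_toRingHom, ← coeff_map, ← sumRingEquiv_rename_id_sumMap, hτ]
  obtain ⟨Q', hQ'⟩ : sumRingEquiv R σ τ Q ∈ Set.range (map (aevalEsymm τ R n).toRingHom) := by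
    rw [mem_range_map_iff_coeffs_subset]
    intro c hc
    obtain ⟨d, -, rfl⟩ := mem_coeffs_iff.mp hc
    exact exists_aevalEsymm_eq hn.le (hcoeff d)
  have hsymm : Q'.IsSymmetric := fun e => by
    apply map_injective _ (aevalEsymm_injective (R := R) hn.ge)
    rw [map_rename, hQ', ← sumRingEquiv_rename_sumMap_id, hσ]
  obtain ⟨p, rfl⟩ := exists_aevalEsymm_eq hm.le hsymm
  refine ⟨(sumRingEquiv R (Fin m) (Fin n)).symm p, ?_⟩
  rw [← (sumRingEquiv R σ τ).symm_apply_apply Q, ← hQ']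
  exact aeval_sumRingEquiv_symm p

end SymmetricInTwoBlocks

end MvPolynomial

section ClearedKernel

variable {R : Type*} [CommRing R] {n : ℕ}

variable (R n) in
/-- Row `j` of `[(1 - λ_j w_k)⁻²]` multiplied by `∏_m (1 - λ_j w_m)²`, with `λ_j = X (inl j)` and
`w_m = X (inr m)`. -/
noncomputable def clearedKernelMatrix : Matrix (Fin n) (Fin n) (MvPolynomial (Fin n ⊕ Fin n) R) :=
  Matrix.of fun j k => ∏ m ∈ univ.erase k, (1 - X (Sum.inl j) * X (Sum.inr m)) ^ 2

theorem rename_sumMap_id_det_clearedKernelMatrix (e : Equiv.Perm (Fin n)) :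
    rename (Sum.map e id) (clearedKernelMatrix R n).det =
      Equiv.Perm.sign e * (clearedKernelMatrix R n).det := by
  rw [AlgHom.map_det, AlgHom.mapMatrix_apply, ← Matrix.det_permute]
  congr 1
  ext j k
  simp [clearedKernelMatrix]

theorem rename_id_sumMap_det_clearedKernelMatrix (e : Equiv.Perm (Fin n)) :
    rename (Sum.map id e) (clearedKernelMatrix R n).det =
      Equiv.Perm.sign e * (clearedKernelMatrix R n).det := by
  rw [AlgHom.map_det, AlgHom.mapMatrix_apply, ← Matrix.det_permute']
  congr 1
  ext j k
  simp only [clearedKernelMatrix, Matrix.map_apply, Matrix.of_apply, Matrix.submatrix_apply,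
    id_eq, map_prod, map_pow, map_sub, map_one, map_mul, rename_X, Sum.map_inl, Sum.map_inr]
  rw [← Equiv.coe_toEmbedding, ← prod_map (univ.erase k) e.toEmbedding
    (fun m => (1 - X (Sum.inl j) * X (Sum.inr m)) ^ 2), map_erase, map_univ_equiv]

theorem eval_det_clearedKernelMatrix {K : Type*} [Field K] {lam w : Fin n → K}
    (h : ∀ j k, 1 - lam j * w k ≠ 0) :
    eval (Sum.elim lam w) (clearedKernelMatrix K n).det =
      (Matrix.of fun j k => ((1 - lam j * w k) ^ 2)⁻¹).det * ∏ i, ∏ j, (1 - lam i * w j) ^ 2 := by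
  have : (clearedKernelMatrix K n).map (eval (Sum.elim lam w)) = Matrix.of fun j k =>
      (∏ m, (1 - lam j * w m) ^ 2) * Matrix.of (fun j k => ((1 - lam j * w k) ^ 2)⁻¹) j k := by
    ext j k
    simp only [clearedKernelMatrix, Matrix.map_apply, Matrix.of_apply, map_prod, map_pow, map_sub,
      map_one, map_mul, eval_X, Sum.elim_inl, Sum.elim_inr]
    rw [← mul_prod_erase univ _ (mem_univ k)]
    field_simp [h j k]
  rw [RingHom.map_det, RingHom.mapMatrix_apply, this, Matrix.det_mul_column, mul_comm]

end ClearedKernel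

theorem eval_aeval_esymm_sum {n : ℕ} (lam w : Fin n → ℂ) (H : MvPolynomial (Fin n ⊕ Fin n) ℂ) :
    eval (Sum.elim lam w) (aeval (Sum.elim
      (fun i : Fin n => rename Sum.inl (esymm (Fin n) ℂ (i + 1)))
      (fun i : Fin n => rename Sum.inr (esymm (Fin n) ℂ (i + 1)))) H) =
        eval (Sum.elim (symmMap n lam) (symmMap n w)) H := by
  have hpoint : (fun i => eval (Sum.elim lam w) (Sum.elim
      (fun i : Fin n => rename Sum.inl (esymm (Fin n) ℂ (i + 1)))
      (fun i : Fin n => rename Sum.inr (esymm (Fin n) ℂ (i + 1))) i)) =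
        Sum.elim (symmMap n lam) (symmMap n w) := by
    funext k
    rcases k with k | k <;> simp [symmMap, esymm, map_sum, map_prod]
  exact (comp_aeval_apply _ (aeval _) H).trans (congrArg (eval · H) hpoint)

/-- There is a polynomial `H₁` in `2n` variables such that, wherever all
`1 − λ_j w_k ≠ 0`,
`det[(1 − λ_j w_k)⁻²] · ∏_{i,j}(1 − λᵢ w_j)²
  = H₁(π_n(λ), π_n(w)) · ∏_{j<k}(λ_j − λ_k) · ∏_{j<k}(w_j − w_k)`. -/
theorem exists_poly_det_mul_prod_factor (n : ℕ) :
    ∃ H₁ : MvPolynomial (Fin n ⊕ Fin n) ℂ,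
      ∀ lam w : Fin n → ℂ, (∀ j k : Fin n, 1 - lam j * w k ≠ 0) →
        Matrix.det (Matrix.of fun j k : Fin n => ((1 - lam j * w k) ^ 2)⁻¹)
            * ∏ i : Fin n, ∏ j : Fin n, (1 - lam i * w j) ^ 2
          = eval (Sum.elim (symmMap n lam) (symmMap n w)) H₁
            * (∏ j : Fin n, ∏ k ∈ Finset.Ioi j, (lam j - lam k))
            * (∏ j : Fin n, ∏ k ∈ Finset.Ioi j, (w j - w k)) := by
  obtain ⟨Q, hQ⟩ : vandermondeProd ℂ n ∣ (clearedKernelMatrix ℂ n).det :=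
    vandermondeProd_dvd rename_sumMap_id_det_clearedKernelMatrix
      rename_id_sumMap_det_clearedKernelMatrix
  have hQ_invariant : ∀ (g : Fin n ⊕ Fin n → Fin n ⊕ Fin n) (c : MvPolynomial (Fin n ⊕ Fin n) ℂ),
      c ≠ 0 → rename g (vandermondeProd ℂ n) = c * vandermondeProd ℂ n →
      rename g (clearedKernelMatrix ℂ n).det = c * (clearedKernelMatrix ℂ n).det →
      rename g Q = Q := fun g c hc hgV hgD =>
    mul_left_cancel₀ (mul_ne_zero hc vandermondeProd_ne_zero) <| by
      rw [hQ, map_mul, hgV] at hgD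
      linear_combination hgD
  obtain ⟨H, hH⟩ := exists_aeval_esymm_sum_eq (Fintype.card_fin n) (Fintype.card_fin n)
    (fun e => hQ_invariant _ _ (by simp) (rename_sumMap_id_vandermondeProd e)
      (rename_sumMap_id_det_clearedKernelMatrix e))
    (fun e => hQ_invariant _ _ (by simp) (rename_id_sumMap_vandermondeProd e)
      (rename_id_sumMap_det_clearedKernelMatrix e))
  refine ⟨H, fun lam w hlw => ?_⟩
  rw [← eval_det_clearedKernelMatrix hlw, hQ, ← hH, map_mul, eval_vandermondeProd,
    eval_aeval_esymm_sum]
  ring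
end

section
/- For all λ = (λ_1, λ_2), μ = (μ_1, μ_2) ∈ 𝔻² with λ_1 ≠ λ_2 and μ_1 ≠ μ_2, one has det[(1 − λ_j · conj(μ_k))^{−2}]_{1≤j,k≤2} / ((λ_1 − λ_2) · conj(μ_1 − μ_2)) = (2 − (λ_1 + λ_2)(conj(μ_1) + conj(μ_2)) + 2 λ_1 λ_2 conj(μ_1) conj(μ_2)) / ∏_{i=1}^2 ∏_{j=1}^2 (1 − λ_i conj(μ_j))². (This identity is equivalent to the explicit formula for the Bergman kernel of the symmetrized bidisc 𝔾_2.) -/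
/-!
Write `a_jk = 1 - λ_j conj μ_k`. Clearing denominators turns the determinant into
`(a₁₂ a₂₁)² - (a₁₁ a₂₂)²`, and since `a₁₂ a₂₁ - a₁₁ a₂₂ = (λ₁ - λ₂)(conj μ₁ - conj μ₂)`, this
difference of squares is that product times `a₁₂ a₂₁ + a₁₁ a₂₂`, the numerator on the right.
-/

open ComplexConjugate

lemma one_sub_mul_conj_ne_zero {𝕜 : Type*} [RCLike 𝕜] {a b : 𝕜} (ha : ‖a‖ < 1) (hb : ‖b‖ < 1) :
    1 - a * conj b ≠ 0 := by
  have hab : ‖a * conj b‖ < 1 := by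
    rw [norm_mul, RCLike.norm_conj]
    exact mul_lt_one_of_nonneg_of_lt_one_left (norm_nonneg a) ha hb.le
  intro h
  rw [← sub_eq_zero.mp h, norm_one] at hab
  exact hab.false

lemma sq_sub_sq_one_sub_mul {R : Type*} [CommRing R] (x₁ x₂ y₁ y₂ : R) :
    ((1 - x₁ * y₂) * (1 - x₂ * y₁)) ^ 2 - ((1 - x₁ * y₁) * (1 - x₂ * y₂)) ^ 2
      = (x₁ - x₂) * (y₁ - y₂) * (2 - (x₁ + x₂) * (y₁ + y₂) + 2 * x₁ * x₂ * y₁ * y₂) := by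
  ring

lemma det_inv_sq_one_sub_mul_div {K : Type*} [Field K] {x₁ x₂ y₁ y₂ : K}
    (h₁₁ : 1 - x₁ * y₁ ≠ 0) (h₁₂ : 1 - x₁ * y₂ ≠ 0) (h₂₁ : 1 - x₂ * y₁ ≠ 0)
    (h₂₂ : 1 - x₂ * y₂ ≠ 0) (hx : x₁ ≠ x₂) (hy : y₁ ≠ y₂) :
    Matrix.det !![((1 - x₁ * y₁) ^ 2)⁻¹, ((1 - x₁ * y₂) ^ 2)⁻¹;
                  ((1 - x₂ * y₁) ^ 2)⁻¹, ((1 - x₂ * y₂) ^ 2)⁻¹]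
        / ((x₁ - x₂) * (y₁ - y₂))
      = (2 - (x₁ + x₂) * (y₁ + y₂) + 2 * x₁ * x₂ * y₁ * y₂)
        / ((1 - x₁ * y₁) ^ 2 * (1 - x₁ * y₂) ^ 2 * (1 - x₂ * y₁) ^ 2 * (1 - x₂ * y₂) ^ 2) := by
  have hxy : (x₁ - x₂) * (y₁ - y₂) ≠ 0 := mul_ne_zero (sub_ne_zero.mpr hx) (sub_ne_zero.mpr hy)
  rw [Matrix.det_fin_two_of, div_eq_div_iff hxy (by positivity),
    mul_comm (2 - _ + _), ← sq_sub_sq_one_sub_mul]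
  -- opaque factors keep `field_simp` from expanding them
  generalize 1 - x₁ * y₁ = a, 1 - x₁ * y₂ = b, 1 - x₂ * y₁ = c, 1 - x₂ * y₂ = d at *
  field_simp

/-- Explicit formula behind the Bergman kernel of the symmetrized bidisc `𝔾₂`:
for `λ, μ ∈ 𝔻²` with distinct coordinates,
`det[(1 − λ_j conj(μ_k))⁻²] / ((λ₁ − λ₂)·conj(μ₁ − μ₂))`
equals `(2 − (λ₁+λ₂)(conj μ₁ + conj μ₂) + 2λ₁λ₂ conj μ₁ conj μ₂)` divided by
`∏_{i,j}(1 − λᵢ conj μ_j)²`. -/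
theorem bergman_kernel_symm_bidisc_formula (l₁ l₂ m₁ m₂ : ℂ)
    (hl₁ : ‖l₁‖ < 1) (hl₂ : ‖l₂‖ < 1) (hm₁ : ‖m₁‖ < 1) (hm₂ : ‖m₂‖ < 1)
    (hl : l₁ ≠ l₂) (hm : m₁ ≠ m₂) :
    Matrix.det !![((1 - l₁ * conj m₁) ^ 2)⁻¹, ((1 - l₁ * conj m₂) ^ 2)⁻¹;
                  ((1 - l₂ * conj m₁) ^ 2)⁻¹, ((1 - l₂ * conj m₂) ^ 2)⁻¹]
        / ((l₁ - l₂) * conj (m₁ - m₂))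
      = (2 - (l₁ + l₂) * (conj m₁ + conj m₂) + 2 * l₁ * l₂ * conj m₁ * conj m₂)
        / ((1 - l₁ * conj m₁) ^ 2 * (1 - l₁ * conj m₂) ^ 2
            * (1 - l₂ * conj m₁) ^ 2 * (1 - l₂ * conj m₂) ^ 2) := by
  rw [map_sub]
  exact det_inv_sq_one_sub_mul_div (one_sub_mul_conj_ne_zero hl₁ hm₁)
    (one_sub_mul_conj_ne_zero hl₁ hm₂) (one_sub_mul_conj_ne_zero hl₂ hm₁)
    (one_sub_mul_conj_ne_zero hl₂ hm₂) hl ((starRingEnd ℂ).injective.ne hm)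
end

section
/- Let V ⊆ ℂ be a connected open set and g_1, …, g_l holomorphic functions on V that are algebraically independent over the rational functions: no nonzero polynomial Q in l+1 variables satisfies Q(z, g_1(z), …, g_l(z)) = 0 for all z ∈ V. Let Û ⊆ ℂ^{1+l} be a connected open set containing the graph {(z, g_1(z), …, g_l(z)) : z ∈ V}, and let φ be a holomorphic Nash-algebraic function on Û such that φ(z, g_1(z), …, g_l(z)) = 0 for all z ∈ V. Then φ is identically zero on Û. -/
/-!
Write the polynomial relation `P(x, φ(x)) = 0` as `φ^m · R(x, φ(x)) = 0`, where `R` is a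
polynomial in `X = φ` whose constant coefficient `R₀(x)` is nonzero. If `φ ≢ 0`, the identity
principle says `φ` vanishes on no open subset of `Û`, so by continuity `R(x, φ(x)) = 0` on `Û`.
On the graph `φ = 0`, hence `R₀(z, g(z)) = 0` there, contradicting the algebraic independence
of `g₁, …, g_l`.
-/

open MvPolynomial

/-- A holomorphic function `F` on an open set `U ⊆ ℂ^k` is *Nash-algebraic* if there is a
nonzero polynomial `P(z, X)` in the `k+1` complex variables such that `P(z, F(z)) = 0`
for all `z ∈ U`. -/
def IsNashAlgebraic {k : ℕ} (U : Set (Fin k → ℂ)) (F : (Fin k → ℂ) → ℂ) : Prop :=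
  DifferentiableOn ℂ F U ∧
    ∃ P : MvPolynomial (Fin k ⊕ Unit) ℂ, P ≠ 0 ∧
      ∀ z ∈ U, eval (Sum.elim z fun _ => F z) P = 0

open Filter Topology Set

section IdentityPrinciple

variable {E F : Type*} [NormedAddCommGroup E] [NormedSpace ℂ E]
  [NormedAddCommGroup F] [NormedSpace ℂ F] [CompleteSpace F] {f : E → F}

/-- Reduces to one variable along the complex lines through the centre. -/
theorem DifferentiableOn.eqOn_zero_of_eventuallyEq_zero_ball {s : E} {ρ : ℝ}
    (hf : DifferentiableOn ℂ f (Metric.ball s ρ)) (hs : f =ᶠ[𝓝 s] 0) :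
    EqOn f 0 (Metric.ball s ρ) := by
  intro y hy
  set L : ℂ → E := fun t => s + t • (y - s)
  set W : Set ℂ := (fun t : ℂ => t • (y - s)) ⁻¹' Metric.ball 0 ρ
  have hL : Differentiable ℂ L := by fun_prop
  have hLW : MapsTo L W (Metric.ball s ρ) := fun t ht => by
    simpa [L, W, mem_ball_iff_norm] using ht
  have hW : IsOpen W := Metric.isOpen_ball.preimage (by fun_prop)
  have hWconn : IsPreconnected W :=
    ((convex_ball 0 ρ).is_linear_preimage (f := fun t : ℂ => t • (y - s))
      ⟨fun a b => add_smul a b _, fun c t => smul_assoc c t _⟩).isPreconnected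
  have h0 : (0 : ℂ) ∈ W := by simpa [W] using Metric.pos_of_mem_ball hy
  have h1 : (1 : ℂ) ∈ W := by simpa [W, dist_eq_norm] using hy
  have hL0 : Tendsto L (𝓝 0) (𝓝 s) := by simpa [L] using hL.continuous.tendsto 0
  have hzero := ((hf.comp hL.differentiableOn hLW).analyticOnNhd hW)
    |>.eqOn_zero_of_preconnected_of_eventuallyEq_zero hWconn h0 (hs.comp_tendsto hL0)
  simpa [L] using hzero h1

theorem DifferentiableOn.eqOn_zero_of_isPreconnected_of_eventuallyEq_zero {U : Set E}
    (hf : DifferentiableOn ℂ f U) (hU : IsOpen U) (hUc : IsPreconnected U) {x₀ : E}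
    (hx₀ : x₀ ∈ U) (h : f =ᶠ[𝓝 x₀] 0) : EqOn f 0 U := by
  suffices U ⊆ {x | f =ᶠ[𝓝 x] 0} from fun x hx => (this hx).self_of_nhds
  refine hUc.subset_of_closure_inter_subset isOpen_setOfPred_eventually_nhds ⟨x₀, hx₀, h⟩ ?_
  rintro x ⟨hxS, hxU⟩
  obtain ⟨ρ, hρ, hball⟩ := Metric.isOpen_iff.mp hU x hxU
  obtain ⟨s, hsS, hxs⟩ := Metric.mem_closure_iff.mp hxS (ρ / 2) (half_pos hρ)
  have hsub : Metric.ball s (ρ / 2) ⊆ U :=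
    (Metric.ball_subset_ball' (by rw [dist_comm]; linarith)).trans hball
  exact mem_of_superset (Metric.isOpen_ball.mem_nhds (Metric.mem_ball.mpr hxs))
    ((hf.mono hsub).eqOn_zero_of_eventuallyEq_zero_ball hsS)

end IdentityPrinciple

theorem eqOn_zero_of_mul_eq_zero_of_frequently_ne_zero {X M₀ : Type*} [TopologicalSpace X]
    [MulZeroClass M₀] [NoZeroDivisors M₀] [TopologicalSpace M₀] [T1Space M₀]
    {U : Set X} (hU : IsOpen U) {φ h : X → M₀} (hφ : ∀ x ∈ U, ∃ᶠ y in 𝓝 x, φ y ≠ 0)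
    (hh : ContinuousOn h U) (hmul : ∀ x ∈ U, φ x * h x = 0) : EqOn h 0 U := by
  intro x hx
  by_contra hne
  apply hφ x hx
  filter_upwards [(hh.continuousAt (hU.mem_nhds hx)).eventually_ne hne, hU.mem_nhds hx]
    with y hy hyU
  exact not_not.mpr ((mul_eq_zero.mp (hmul y hyU)).resolve_right hy)

namespace MvPolynomial

variable (σ R : Type*) [CommSemiring R]

noncomputable def sumUnitEquivPolynomial : MvPolynomial (σ ⊕ Unit) R ≃ₐ[R]
    Polynomial (MvPolynomial σ R) :=
  (renameEquiv R (Equiv.optionEquivSumPUnit σ).symm).trans (optionEquivLeft R σ)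

variable {σ R}

theorem eval_sumElim_eq_eval₂_sumUnitEquivPolynomial (P : MvPolynomial (σ ⊕ Unit) R)
    (x : σ → R) (t : R) :
    eval (Sum.elim x fun _ => t) P = (sumUnitEquivPolynomial σ R P).eval₂ (eval x) t := by
  have hcomp : (fun o => Option.elim o t x) ∘ (Equiv.optionEquivSumPUnit σ).symm =
      Sum.elim x fun _ => t := by
    ext (i | ⟨⟩) <;> rfl
  rw [sumUnitEquivPolynomial, AlgEquiv.trans_apply, ← Polynomial.eval_map,
    ← optionEquivLeft_elim_eval, renameEquiv_apply, eval_rename, hcomp]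

theorem continuousOn_eval_sumElim {U : Set (σ → ℂ)} {φ : (σ → ℂ) → ℂ} (hφ : ContinuousOn φ U)
    (P : MvPolynomial (σ ⊕ Unit) ℂ) :
    ContinuousOn (fun x => eval (Sum.elim x fun _ => φ x) P) U :=
  (continuous_eval P).comp_continuousOn <| continuousOn_pi.mpr fun
    | .inl i => (continuous_apply i).continuousOn
    | .inr _ => hφ

theorem exists_ne_zero_eval_eq_zero_of_eval_sumElim_eq_zero {U : Set (σ → ℂ)} (hU : IsOpen U)
    {φ : (σ → ℂ) → ℂ} (hφ : ContinuousOn φ U) (hφU : ∀ x ∈ U, ∃ᶠ y in 𝓝 x, φ y ≠ 0)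
    {P : MvPolynomial (σ ⊕ Unit) ℂ} (hP : P ≠ 0)
    (hPφ : ∀ x ∈ U, eval (Sum.elim x fun _ => φ x) P = 0) :
    ∃ Q : MvPolynomial σ ℂ, Q ≠ 0 ∧ ∀ x ∈ U, φ x = 0 → eval x Q = 0 := by
  set q := sumUnitEquivPolynomial σ ℂ P with hq_def
  have hq : q ≠ 0 := (map_ne_zero_iff _ (AlgEquiv.injective _)).mpr hP
  obtain ⟨r, hqr, hXr⟩ := q.exists_eq_pow_rootMultiplicity_mul_and_not_dvd hq 0
  rw [map_zero, sub_zero] at hqr hXr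
  set m := q.rootMultiplicity 0
  have hr_eval : ∀ x, r.eval₂ (eval x) (φ x) =
      eval (Sum.elim x fun _ => φ x) ((sumUnitEquivPolynomial σ ℂ).symm r) := fun x => by
    rw [eval_sumElim_eq_eval₂_sumUnitEquivPolynomial, AlgEquiv.apply_symm_apply]
  have hr_zero : EqOn (fun x => r.eval₂ (eval x) (φ x)) 0 U := by
    refine eqOn_zero_of_mul_eq_zero_of_frequently_ne_zero hU (φ := fun x => φ x ^ m)
      (fun x hx => (hφU x hx).mono fun y => pow_ne_zero _) ?_ fun x hx => ?_
    · simpa only [hr_eval] using continuousOn_eval_sumElim hφ _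
    · have h := hPφ x hx
      rwa [eval_sumElim_eq_eval₂_sumUnitEquivPolynomial, ← hq_def, hqr, Polynomial.eval₂_mul,
        Polynomial.eval₂_X_pow] at h
  refine ⟨r.coeff 0, mt Polynomial.X_dvd_iff.mpr hXr, fun x hx hφx => ?_⟩
  simpa [hφx, Polynomial.eval₂_at_zero] using hr_zero hx

end MvPolynomial

theorem nash_algebraic_vanishing_on_graph_general {l : ℕ}
    (V : Set ℂ)
    (g : Fin l → ℂ → ℂ)
    (hindep : ¬ ∃ Q : MvPolynomial (Fin (l + 1)) ℂ, Q ≠ 0 ∧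
      ∀ z ∈ V, eval (Fin.cons z fun i => g i z) Q = 0)
    (Uhat : Set (Fin (l + 1) → ℂ)) (hUopen : IsOpen Uhat) (hUconn : IsConnected Uhat)
    (hgraph : ∀ z ∈ V, (Fin.cons z fun i => g i z) ∈ Uhat)
    (φ : (Fin (l + 1) → ℂ) → ℂ) (hφ : IsNashAlgebraic Uhat φ)
    (hvan : ∀ z ∈ V, φ (Fin.cons z fun i => g i z) = 0) :
    ∀ x ∈ Uhat, φ x = 0 := by
  obtain ⟨hφdiff, P, hP, hPφ⟩ := hφ
  by_contra! ⟨x₀, hx₀, hφx₀⟩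
  have hφU : ∀ x ∈ Uhat, ∃ᶠ y in 𝓝 x, φ y ≠ 0 := fun x hx hev =>
    hφx₀ <| hφdiff.eqOn_zero_of_isPreconnected_of_eventuallyEq_zero hUopen
      hUconn.isPreconnected hx (hev.mono fun _ => not_not.mp) hx₀
  obtain ⟨Q, hQ, hQφ⟩ :=
    exists_ne_zero_eval_eq_zero_of_eval_sumElim_eq_zero hUopen hφdiff.continuousOn hφU hP hPφ
  exact hindep ⟨Q, hQ, fun z hz => hQφ _ (hgraph z hz) (hvan z hz)⟩

/-- If `g₁, …, g_l` are holomorphic on a connected open `V ⊆ ℂ` and algebraically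
independent over the rational functions, and `φ` is holomorphic Nash-algebraic on a
connected open `Û ⊆ ℂ^{1+l}` containing the graph `z ↦ (z, g₁(z), …, g_l(z))` with
`φ(z, g₁(z), …, g_l(z)) = 0` on `V`, then `φ ≡ 0` on `Û`. -/
theorem nash_algebraic_vanishing_on_graph {l : ℕ}
    (V : Set ℂ) (hVopen : IsOpen V) (hVconn : IsConnected V)
    (g : Fin l → ℂ → ℂ) (hg : ∀ i, DifferentiableOn ℂ (g i) V)
    (hindep : ¬ ∃ Q : MvPolynomial (Fin (l + 1)) ℂ, Q ≠ 0 ∧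
      ∀ z ∈ V, eval (Fin.cons z fun i => g i z) Q = 0)
    (Uhat : Set (Fin (l + 1) → ℂ)) (hUopen : IsOpen Uhat) (hUconn : IsConnected Uhat)
    (hgraph : ∀ z ∈ V, (Fin.cons z fun i => g i z) ∈ Uhat)
    (φ : (Fin (l + 1) → ℂ) → ℂ) (hφ : IsNashAlgebraic Uhat φ)
    (hvan : ∀ z ∈ V, φ (Fin.cons z fun i => g i z) = 0) :
    ∀ x ∈ Uhat, φ x = 0 :=
  nash_algebraic_vanishing_on_graph_general V g hindep Uhat hUopen hUconn hgraph φ hφ hvan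
end

section
/- Let D ⊆ ℂ be a connected open set containing 0 and F : D → ℂ^m a holomorphic map with F(0) = 0. Then for every z ∈ D, the vector F(z) lies in the complex linear span of the set of derivatives {F^{(δ)}(0) : δ ≥ 1} ⊆ ℂ^m. -/
/-!
Near `0` the map `F` is the sum of its Taylor series `∑ zⁿ/n! • F⁽ⁿ⁾(0)`, every term of which lies
in the span `S` of the derivatives (the term `n = 0` vanishes since `F 0 = 0`); `S` is closed, being
finite-dimensional, so `F` takes values in `S` near `0`. Composed with the quotient map `ℂᵐ → ℂᵐ ⧸ S`,
`F` becomes a holomorphic map vanishing near `0`, hence on all of the connected set `D`.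
-/

open Filter Topology Nat

section

variable {E : Type*} [NormedAddCommGroup E] [NormedSpace ℂ E] [CompleteSpace E]
  {S : Submodule ℂ E} [hS : IsClosed (S : Set E)] {f : ℂ → E} {D : Set ℂ} {c : ℂ}

theorem Complex.eventually_mem_of_iteratedDeriv_mem (hD : D ∈ 𝓝 c)
    (hf : DifferentiableOn ℂ f D) (hderiv : ∀ n, iteratedDeriv n f c ∈ S) :
    ∀ᶠ z in 𝓝 c, f z ∈ S := by
  obtain ⟨r, hr, hball⟩ := Metric.mem_nhds_iff.mp hD
  filter_upwards [Metric.ball_mem_nhds c hr] with z hz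
  have hterm (n : ℕ) : (n ! : ℂ)⁻¹ • (z - c) ^ n • iteratedDeriv n f c ∈ S :=
    S.smul_mem _ (S.smul_mem _ (hderiv n))
  exact hS.mem_of_tendsto (Complex.hasSum_taylorSeries_on_ball (hf.mono hball) hz)
    (Eventually.of_forall fun s => S.sum_mem fun n _ => hterm n)

theorem DifferentiableOn.mem_of_eventually_mem (hf : DifferentiableOn ℂ f D) (hDopen : IsOpen D)
    (hDconn : IsPreconnected D) (hc : c ∈ D) (hfc : ∀ᶠ z in 𝓝 c, f z ∈ S) :
    ∀ z ∈ D, f z ∈ S := by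
  have hg : AnalyticOnNhd ℂ (S.mkQL ∘ f) D :=
    (S.mkQL.differentiable.comp_differentiableOn hf).analyticOnNhd hDopen
  have hgc : S.mkQL ∘ f =ᶠ[𝓝 c] 0 := by
    filter_upwards [hfc] with z hz
    exact (Submodule.Quotient.mk_eq_zero S).mpr hz
  intro z hz
  exact (Submodule.Quotient.mk_eq_zero S).mp
    (hg.eqOn_zero_of_preconnected_of_eventuallyEq_zero hDconn hc hgc hz)

theorem DifferentiableOn.mem_of_iteratedDeriv_mem (hf : DifferentiableOn ℂ f D)
    (hDopen : IsOpen D) (hDconn : IsPreconnected D) (hc : c ∈ D)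
    (hderiv : ∀ n, iteratedDeriv n f c ∈ S) : ∀ z ∈ D, f z ∈ S :=
  hf.mem_of_eventually_mem hDopen hDconn hc
    (Complex.eventually_mem_of_iteratedDeriv_mem (hDopen.mem_nhds hc) hf hderiv)

end

/-- If `F : D → ℂ^m` is holomorphic on a connected open set `D ⊆ ℂ` containing `0` with
`F(0) = 0`, then for every `z ∈ D` the vector `F(z)` lies in the complex linear span of
the derivatives `{F^{(δ)}(0) : δ ≥ 1}`. -/
theorem holomorphic_mem_span_iteratedDeriv {m : ℕ}
    (D : Set ℂ) (hDopen : IsOpen D) (hDconn : IsConnected D) (h0 : (0 : ℂ) ∈ D)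
    (F : ℂ → (Fin m → ℂ)) (hF : DifferentiableOn ℂ F D) (hF0 : F 0 = 0) :
    ∀ z ∈ D, F z ∈ Submodule.span ℂ
      {v : Fin m → ℂ | ∃ δ : ℕ, 1 ≤ δ ∧ v = iteratedDeriv δ F 0} := by
  set S := Submodule.span ℂ {v : Fin m → ℂ | ∃ δ : ℕ, 1 ≤ δ ∧ v = iteratedDeriv δ F 0}
  have : IsClosed (S : Set (Fin m → ℂ)) := S.closed_of_finiteDimensional
  have hderiv : ∀ n, iteratedDeriv n F 0 ∈ S
    | 0 => by simp [hF0]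
    | n + 1 => Submodule.subset_span ⟨n + 1, n.succ_pos, rfl⟩
  exact hF.mem_of_iteratedDeriv_mem hDopen hDconn.isPreconnected h0 hderiv
end
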